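/- Let U be a nonprincipal ultrafilter on ℕ, let h : ℕ → ℕ, and let ℕ be partitioned into consecutive finite intervals I_n = [a_n, a_{n+1}) such that h(x) < a_{n+1} for all x < a_n. Suppose D ∈ U is a union of intervals of this partition, and let E be the union of all I_n and I_{n+1} such that I_n ⊆ D. Then for every infinite X ⊆ ℕ with ν_X ≤_U h, the set X ∩ E is infinite. -/

import Mathlib

/-! The set `D ∩ {x | ν_X x ≤ h x}` lies in the nonprincipal `U`, so it is infinite. For `x` in it
with `x ∈ I_n ⊆ D`, the point `ν_X x ∈ X` lies in `(x, h x] ⊆ I_n ∪ I_{n+1} ⊆ E`, and these points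
are unbounded since `ν_X x > x`. -/

open Cardinal Set Filter

/-- A nonprincipal ultrafilter on ℕ: one that is not of the form `pure n`. -/
def Nonprincipal (U : Ultrafilter ℕ) : Prop := ∀ n : ℕ, U ≠ pure n

/-- `C` is cofinal in the ultrapower `U-prod ω` with respect to `≤_U`. -/
def UCofinal (U : Ultrafilter ℕ) (C : Set (ℕ → ℕ)) : Prop :=
  ∀ f : ℕ → ℕ, ∃ g ∈ C, {n : ℕ | f n ≤ g n} ∈ U

/-- The cofinality of the ultrapower `U-prod ω`: the least cardinality of a
set of functions cofinal with respect to `≤_U`. -/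
noncomputable def cfUProd (U : Ultrafilter ℕ) : Cardinal :=
  sInf {c : Cardinal | ∃ C : Set (ℕ → ℕ), UCofinal U C ∧ c = #C}

/-- The bounding number 𝔟. -/
noncomputable def boundingNumber : Cardinal :=
  sInf {c : Cardinal | ∃ B : Set (ℕ → ℕ),
    (∀ f : ℕ → ℕ, ∃ g ∈ B, {n : ℕ | f n ≤ g n}.Infinite) ∧ c = #B}

/-- The dominating number 𝔡. -/
noncomputable def dominatingNumber : Cardinal :=
  sInf {c : Cardinal | ∃ D : Set (ℕ → ℕ),
    (∀ f : ℕ → ℕ, ∃ g ∈ D, {n : ℕ | ¬ f n ≤ g n}.Finite) ∧ c = #D}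

/-- The splitting number 𝔰. -/
noncomputable def splittingNumber : Cardinal :=
  sInf {c : Cardinal | ∃ S : Set (Set ℕ),
    (∀ X : Set ℕ, X.Infinite → ∃ Y ∈ S, (X ∩ Y).Infinite ∧ (X \ Y).Infinite) ∧ c = #S}

/-- A family of infinite subsets of ℕ is groupwise dense if it is closed under
infinite subsets and finite modifications and, for every partition of ℕ into
consecutive finite intervals (given by a strictly increasing sequence starting
at 0), the union of some infinitely many of the intervals is in the family. -/
def GroupwiseDense (G : Set (Set ℕ)) : Prop :=
  (∀ X ∈ G, X.Infinite) ∧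
  (∀ X ∈ G, ∀ Y : Set ℕ, Y ⊆ X → Y.Infinite → Y ∈ G) ∧
  (∀ X ∈ G, ∀ Y : Set ℕ, (symmDiff X Y).Finite → Y ∈ G) ∧
  (∀ a : ℕ → ℕ, a 0 = 0 → StrictMono a →
    ∃ K : Set ℕ, K.Infinite ∧ (⋃ k ∈ K, Set.Ico (a k) (a (k + 1))) ∈ G)

/-- The groupwise density number 𝔤. -/
noncomputable def groupwiseDensityNumber : Cardinal :=
  sInf {c : Cardinal | ∃ 𝒢 : Set (Set (Set ℕ)),
    (∀ G ∈ 𝒢, GroupwiseDense G) ∧ ⋂₀ 𝒢 = ∅ ∧ c = #𝒢}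

/-- `U` is a pseudo-P_κ point. -/
def PseudoPPoint (U : Ultrafilter ℕ) (κ : Cardinal) : Prop :=
  ∀ F : Set (Set ℕ), (∀ A ∈ F, A ∈ U) → #F < κ →
    ∃ A : Set ℕ, A.Infinite ∧ ∀ B ∈ F, (A \ B).Finite

/-- A finite-to-one function on ℕ. -/
def FinToOne (f : ℕ → ℕ) : Prop := ∀ n : ℕ, (f ⁻¹' {n}).Finite

/-- Two ultrafilters are nearly coherent if they have a common image under
finite-to-one maps. -/
def NearlyCoherent (U U' : Ultrafilter ℕ) : Prop :=
  ∃ f f' : ℕ → ℕ, FinToOne f ∧ FinToOne f' ∧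
    Ultrafilter.map f U = Ultrafilter.map f' U'

/-- `nuX X n` is the least element of `X` greater than `n`. -/
noncomputable def nuX (X : Set ℕ) (n : ℕ) : ℕ := sInf {m : ℕ | m ∈ X ∧ n < m}

theorem Nonprincipal.infinite_of_mem {U : Ultrafilter ℕ} (hU : Nonprincipal U) {s : Set ℕ}
    (hs : s ∈ U) : s.Infinite := fun hfin =>
  let ⟨x, _, hx⟩ := U.eq_pure_of_finite_mem hfin hs
  hU x hx

theorem nuX_mem_and_lt {X : Set ℕ} (hX : X.Infinite) (n : ℕ) : nuX X n ∈ X ∧ n < nuX X n :=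
  Nat.sInf_mem (hX.exists_gt n)

theorem nuX_mem_inter_iUnion_Ico {h a : ℕ → ℕ}
    (hgrow : ∀ n : ℕ, ∀ x : ℕ, x < a n → h x < a (n + 1))
    {K X : Set ℕ} (hX : X.Infinite) {x : ℕ}
    (hxD : x ∈ ⋃ n ∈ K, Ico (a n) (a (n + 1))) (hxh : nuX X x ≤ h x) :
    nuX X x ∈ X ∩ ⋃ n ∈ K, Ico (a n) (a (n + 2)) := by
  obtain ⟨hmX, hxm⟩ := nuX_mem_and_lt hX x
  obtain ⟨n, hnK, hxn⟩ := mem_iUnion₂.mp hxD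
  exact ⟨hmX, mem_biUnion hnK ⟨hxn.1.trans hxm.le, hxh.trans_lt (hgrow (n + 1) x hxn.2)⟩⟩

theorem stmt_12_general (U : Ultrafilter ℕ) (hU : Nonprincipal U) (h : ℕ → ℕ)
    (a : ℕ → ℕ)
    (hgrow : ∀ n : ℕ, ∀ x : ℕ, x < a n → h x < a (n + 1))
    (K : Set ℕ) (hD : (⋃ n ∈ K, Set.Ico (a n) (a (n + 1))) ∈ U)
    (X : Set ℕ) (hX : X.Infinite)
    (hXh : {n : ℕ | nuX X n ≤ h n} ∈ U) :
    (X ∩ ⋃ n ∈ K, Set.Ico (a n) (a (n + 2))).Infinite := by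
  have hS := hU.infinite_of_mem (U.inter_mem hD hXh)
  refine infinite_of_forall_exists_gt fun N => ?_
  obtain ⟨x, ⟨hxD, hxh⟩, hNx⟩ := hS.exists_gt N
  exact ⟨nuX X x, nuX_mem_inter_iUnion_Ico hgrow hX hxD hxh,
    hNx.trans (nuX_mem_and_lt hX x).2⟩

/-- If D ∈ U is a union of intervals I_n = [a_n, a_{n+1}) of a partition
satisfying h(x) < a_{n+1} for all x < a_n, and E is the union of all I_n and
I_{n+1} with I_n ⊆ D, then every infinite X with ν_X ≤_U h meets E in an
infinite set. -/
theorem stmt_12 (U : Ultrafilter ℕ) (hU : Nonprincipal U) (h : ℕ → ℕ)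
    (a : ℕ → ℕ) (ha0 : a 0 = 0) (ha : StrictMono a)
    (hgrow : ∀ n : ℕ, ∀ x : ℕ, x < a n → h x < a (n + 1))
    (K : Set ℕ) (hD : (⋃ n ∈ K, Set.Ico (a n) (a (n + 1))) ∈ U)
    (X : Set ℕ) (hX : X.Infinite)
    (hXh : {n : ℕ | nuX X n ≤ h n} ∈ U) :
    (X ∩ ⋃ n ∈ K, Set.Ico (a n) (a (n + 2))).Infinite :=
  stmt_12_general U hU h a hgrow K hD X hX hXh
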